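/- arXiv:1411.7744 — 8 statements merged into one kernel-verified Lean document; each statement's English description precedes it below -/
import Mathlib

section
/- Every quasi-associative algebra is conservative. Precisely, if A is an associative algebra over a field of characteristic zero, λ a fixed scalar, and a new multiplication is defined by a∘b = λab + (1−λ)ba, then the algebra (A,∘) is conservative with associated multiplication F(a,b) = a∘b. -/
/-!
Write `S_a(x, y) = λ xay + (1 - λ) yax`. Expanding in the associative product, the
commutator of `L_a` with the quasi-associative product `a ∘ b` is `-S_a`, the coefficients
combining through `λ + (1 - λ) = 1`. Expanding once more, `[L_b, S_a] = -S_{a ∘ b}`, so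
`[L_b, [L_a, ∘]] = S_{a ∘ b} = -[L_{a ∘ b}, ∘]`.
-/

namespace QuasiAssociative

section Bracket

variable {A : Type*} [AddCommGroup A]

def bracket (L : A → A) (P : A → A → A) : A → A → A :=
  fun x y => L (P x y) - P (L x) y - P x (L y)

lemma bracket_neg (L : A → A) (hL : ∀ z, L (-z) = -L z) (P : A → A → A) :
    bracket L (-P) = -bracket L P := by
  ext x y
  simp only [bracket, Pi.neg_apply, hL]
  abel

end Bracket

variable {R A : Type*} [CommRing R] [Ring A] [Algebra R A]

def quasiMul (lam : R) (a b : A) : A :=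
  lam • (a * b) + (1 - lam) • (b * a)

def quasiSandwich (lam : R) (a x y : A) : A :=
  lam • (x * a * y) + (1 - lam) • (y * a * x)

lemma quasiMul_neg_right (lam : R) (a z : A) :
    quasiMul lam a (-z) = -quasiMul lam a z := by
  simp only [quasiMul, mul_neg, neg_mul, smul_neg, neg_add]

lemma bracket_quasiMul (lam : R) (a : A) :
    bracket (quasiMul lam a) (quasiMul lam) = -quasiSandwich lam a := by
  ext x y
  simp only [bracket, quasiMul, quasiSandwich, Pi.neg_apply, smul_add, mul_add, add_mul,
    smul_smul, mul_smul_comm, smul_mul_assoc, mul_assoc]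
  module

lemma bracket_quasiSandwich (lam : R) (a b : A) :
    bracket (quasiMul lam b) (quasiSandwich lam a) = -quasiSandwich lam (quasiMul lam a b) := by
  ext x y
  simp only [bracket, quasiMul, quasiSandwich, Pi.neg_apply, smul_add, mul_add, add_mul,
    smul_smul, mul_smul_comm, smul_mul_assoc, mul_assoc]
  module

theorem bracket_bracket_quasiMul (lam : R) (a b : A) :
    bracket (quasiMul lam b) (bracket (quasiMul lam a) (quasiMul lam)) =
      -bracket (quasiMul lam (quasiMul lam a b)) (quasiMul lam) := by
  rw [bracket_quasiMul, bracket_neg _ (quasiMul_neg_right lam b), bracket_quasiSandwich,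
    bracket_quasiMul]

end QuasiAssociative

theorem quasiAssociative_isConservative_general
    (K : Type*) [Field K]
    (A : Type*) [Ring A] [Algebra K A]
    (lam : K) (m F : A → A → A)
    (hm : ∀ a b : A, m a b = lam • (a * b) + (1 - lam) • (b * a))
    (hF : ∀ a b : A, F a b = m a b) :
    ∀ a b x y : A,
      m b (m a (m x y) - m (m a x) y - m x (m a y))
        - m a (m (m b x) y) + m (m a (m b x)) y + m (m b x) (m a y)
        - m a (m x (m b y)) + m (m a x) (m b y) + m x (m a (m b y))
      = - m (F a b) (m x y) + m (m (F a b) x) y + m x (m (F a b) y) := by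
  intro a b x y
  obtain rfl : m = QuasiAssociative.quasiMul lam := funext fun a => funext fun b => hm a b
  have key := congrFun₂ (QuasiAssociative.bracket_bracket_quasiMul lam a b) x y
  simp only [QuasiAssociative.bracket, Pi.neg_apply] at key
  rw [hF]
  linear_combination (norm := abel) key

/-- Every quasi-associative algebra is conservative: if `A` is an associative algebra
over a field of characteristic zero and `m a b = λ • (a*b) + (1-λ) • (b*a)`, then
`(A, m)` satisfies the conservativity identity with associated multiplication
`F(a,b) = m a b`. -/
theorem quasiAssociative_isConservative
    (K : Type*) [Field K] [CharZero K]
    (A : Type*) [Ring A] [Algebra K A]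
    (lam : K) (m F : A → A → A)
    (hm : ∀ a b : A, m a b = lam • (a * b) + (1 - lam) • (b * a))
    (hF : ∀ a b : A, F a b = m a b) :
    ∀ a b x y : A,
      m b (m a (m x y) - m (m a x) y - m x (m a y))
        - m a (m (m b x) y) + m (m a (m b x)) y + m (m b x) (m a y)
        - m a (m x (m b y)) + m (m a x) (m b y) + m x (m a (m b y))
      = - m (F a b) (m x y) + m (m (F a b) x) y + m x (m (F a b) y) :=
  quasiAssociative_isConservative_general K A lam m F hm hF
end

section
/- If P is a Poisson algebra with associative commutative product ab and Lie bracket {a,b}, then the algebra (P,*) with multiplication a*b = ab + {a,b} is a conservative algebra with associated multiplication F(a,b) = a*b. -/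
/-!
Write the left multiplication of `⋆` as `L_a = μ_a + ad_a`, with `μ_a x = a x` and
`ad_a x = {a, x}`. By Leibniz and Jacobi, `ad_a` is a derivation of `⋆`, i.e. `[ad_a, ⋆] = 0`.
Hence `[L_a, ⋆] = [μ_a, ⋆]`, and the Jacobi identity for the action of operators on bilinear
maps turns `[ad_b, [μ_a, ⋆]]` into `[[ad_b, μ_a], ⋆] = [μ_{b,a}, ⋆]`. The remaining term
`[μ_b, [μ_a, ⋆]] = -[μ_{ab}, ⋆]` is a direct computation with the Leibniz rule, and the two
add up to `-[μ_{a ⋆ b}, ⋆] = -[L_{a ⋆ b}, ⋆]`.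
-/

section OpBracket

variable {R M : Type*} [CommSemiring R] [AddCommGroup M] [Module R M]

/-- The bracket `[T, B]` of the definition of conservative algebras. -/
def opBracket (T : Module.End R M) (B : M →ₗ[R] M →ₗ[R] M) : M →ₗ[R] M →ₗ[R] M :=
  B.compr₂ T - B ∘ₗ T - B.compl₂ T

@[simp]
theorem opBracket_apply (T : Module.End R M) (B : M →ₗ[R] M →ₗ[R] M) (x y : M) :
    opBracket T B x y = T (B x y) - B (T x) y - B x (T y) := rfl

theorem opBracket_add_left (S T : Module.End R M) (B : M →ₗ[R] M →ₗ[R] M) :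
    opBracket (S + T) B = opBracket S B + opBracket T B := by
  ext x y
  simp only [opBracket_apply, LinearMap.add_apply, map_add]
  abel

theorem opBracket_neg_left (T : Module.End R M) (B : M →ₗ[R] M →ₗ[R] M) :
    opBracket (-T) B = -opBracket T B := by
  ext x y
  simp only [opBracket_apply, LinearMap.neg_apply, map_neg]
  abel

theorem opBracket_add_right (T : Module.End R M) (B C : M →ₗ[R] M →ₗ[R] M) :
    opBracket T (B + C) = opBracket T B + opBracket T C := by
  ext x y
  simp only [opBracket_apply, LinearMap.add_apply, map_add]
  abel

theorem opBracket_lie (S T : Module.End R M) (B : M →ₗ[R] M →ₗ[R] M) :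
    opBracket ⁅S, T⁆ B = opBracket S (opBracket T B) - opBracket T (opBracket S B) := by
  ext x y
  simp only [opBracket_apply, Ring.lie_def, LinearMap.sub_apply, Module.End.mul_apply, map_sub]
  abel

theorem opBracket_opBracket_of_opBracket_eq_zero {S : Module.End R M}
    {B : M →ₗ[R] M →ₗ[R] M} (hS : opBracket S B = 0) (T : Module.End R M) :
    opBracket S (opBracket T B) = opBracket ⁅S, T⁆ B := by
  have hT0 : opBracket T 0 = 0 := by
    ext x y
    simp
  rw [opBracket_lie, hS, hT0, sub_zero]

end OpBracket

section Poisson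

variable {K P : Type*} [CommSemiring K] [CommRing P] [Algebra K P]

def poissonStar (br : P →ₗ[K] P →ₗ[K] P) : P →ₗ[K] P →ₗ[K] P :=
  LinearMap.mul K P + br

theorem poissonStar_apply (br : P →ₗ[K] P →ₗ[K] P) (a : P) :
    poissonStar br a = LinearMap.mul K P a + br a := rfl

theorem poissonStar_apply_apply (br : P →ₗ[K] P →ₗ[K] P) (a b : P) :
    poissonStar br a b = a * b + br a b := rfl

variable {br : P →ₗ[K] P →ₗ[K] P}

theorem bracket_mul_right (hanti : ∀ a b : P, br a b = - br b a)
    (hleib : ∀ a b c : P, br (a * b) c = a * br b c + br a c * b) (a b c : P) :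
    br c (a * b) = a * br c b + br c a * b := by
  rw [hanti c, hleib, hanti b c, hanti a c]
  ring

theorem opBracket_bracket_mul (hanti : ∀ a b : P, br a b = - br b a)
    (hleib : ∀ a b c : P, br (a * b) c = a * br b c + br a c * b) (a : P) :
    opBracket (br a) (LinearMap.mul K P) = 0 := by
  ext x y
  simp only [opBracket_apply, LinearMap.mul_apply', bracket_mul_right hanti hleib,
    LinearMap.zero_apply]
  ring

theorem opBracket_bracket_bracket (hanti : ∀ a b : P, br a b = - br b a)
    (hjac : ∀ a b c : P, br a (br b c) + br b (br c a) + br c (br a b) = 0) (a : P) :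
    opBracket (br a) br = 0 := by
  ext x y
  simp only [opBracket_apply, LinearMap.zero_apply]
  rw [hanti (br a x) y, hanti a y, map_neg]
  linear_combination hjac a x y

theorem opBracket_bracket_poissonStar (hanti : ∀ a b : P, br a b = - br b a)
    (hjac : ∀ a b c : P, br a (br b c) + br b (br c a) + br c (br a b) = 0)
    (hleib : ∀ a b c : P, br (a * b) c = a * br b c + br a c * b) (a : P) :
    opBracket (br a) (poissonStar br) = 0 := by
  rw [poissonStar, opBracket_add_right, opBracket_bracket_mul hanti hleib,
    opBracket_bracket_bracket hanti hjac, add_zero]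

theorem lie_bracket_mul (hanti : ∀ a b : P, br a b = - br b a)
    (hleib : ∀ a b c : P, br (a * b) c = a * br b c + br a c * b) (a b : P) :
    ⁅br b, LinearMap.mul K P a⁆ = LinearMap.mul K P (br b a) := by
  ext x
  simp only [Ring.lie_def, LinearMap.sub_apply, Module.End.mul_apply, LinearMap.mul_apply',
    bracket_mul_right hanti hleib]
  ring

theorem opBracket_mul_opBracket_mul_poissonStar (hanti : ∀ a b : P, br a b = - br b a)
    (hleib : ∀ a b c : P, br (a * b) c = a * br b c + br a c * b) (a b : P) :
    opBracket (LinearMap.mul K P b) (opBracket (LinearMap.mul K P a) (poissonStar br)) =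
      -opBracket (LinearMap.mul K P (a * b)) (poissonStar br) := by
  ext x y
  simp only [opBracket_apply, poissonStar, LinearMap.add_apply, LinearMap.mul_apply', map_add,
    map_sub, LinearMap.neg_apply, hleib, bracket_mul_right hanti hleib]
  linear_combination (x * y) * hanti a b

theorem opBracket_poissonStar_opBracket_poissonStar (hanti : ∀ a b : P, br a b = - br b a)
    (hjac : ∀ a b c : P, br a (br b c) + br b (br c a) + br c (br a b) = 0)
    (hleib : ∀ a b c : P, br (a * b) c = a * br b c + br a c * b) (a b : P) :
    opBracket (poissonStar br b) (opBracket (poissonStar br a) (poissonStar br)) =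
      -opBracket (poissonStar br (poissonStar br a b)) (poissonStar br) := by
  have hder := opBracket_bracket_poissonStar hanti hjac hleib
  have hleft (c : P) :
      opBracket (poissonStar br c) (poissonStar br) =
        opBracket (LinearMap.mul K P c) (poissonStar br) := by
    rw [poissonStar_apply, opBracket_add_left, hder, add_zero]
  calc opBracket (poissonStar br b) (opBracket (poissonStar br a) (poissonStar br))
      = opBracket (LinearMap.mul K P b) (opBracket (LinearMap.mul K P a) (poissonStar br)) +
          opBracket (br b) (opBracket (LinearMap.mul K P a) (poissonStar br)) := by
        rw [hleft, poissonStar_apply, opBracket_add_left]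
    _ = -opBracket (LinearMap.mul K P (a * b)) (poissonStar br) +
          opBracket (LinearMap.mul K P (br b a)) (poissonStar br) := by
        rw [opBracket_mul_opBracket_mul_poissonStar hanti hleib,
          opBracket_opBracket_of_opBracket_eq_zero (hder b), lie_bracket_mul hanti hleib]
    _ = -opBracket (poissonStar br (poissonStar br a b)) (poissonStar br) := by
        rw [hleft, poissonStar_apply_apply, map_add,
          opBracket_add_left, hanti b a, map_neg, opBracket_neg_left]
        abel

end Poisson

theorem poisson_star_isConservative_general
    (K : Type*) [Field K]
    (P : Type*) [CommRing P] [Algebra K P]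
    (br : P →ₗ[K] P →ₗ[K] P)
    (hanti : ∀ a b : P, br a b = - br b a)
    (hjac : ∀ a b c : P, br a (br b c) + br b (br c a) + br c (br a b) = 0)
    (hleib : ∀ a b c : P, br (a * b) c = a * br b c + br a c * b)
    (m F : P → P → P)
    (hm : ∀ a b : P, m a b = a * b + br a b)
    (hF : ∀ a b : P, F a b = m a b) :
    ∀ a b x y : P,
      m b (m a (m x y) - m (m a x) y - m x (m a y))
        - m a (m (m b x) y) + m (m a (m b x)) y + m (m b x) (m a y)
        - m a (m x (m b y)) + m (m a x) (m b y) + m x (m a (m b y))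
      = - m (F a b) (m x y) + m (m (F a b) x) y + m x (m (F a b) y) := by
  obtain rfl : m = fun a b => poissonStar br a b :=
    funext₂ fun a b => (hm a b).trans (poissonStar_apply_apply br a b).symm
  obtain rfl : F = fun a b => poissonStar br a b := funext₂ hF
  intro a b x y
  have key := congr($(opBracket_poissonStar_opBracket_poissonStar hanti hjac hleib a b) x y)
  simp only [opBracket_apply, LinearMap.neg_apply] at key
  linear_combination key

/-- If `P` is a Poisson algebra with associative commutative product `a*b` and Lie
bracket `⁅a,b⁆` satisfying the Leibniz rule, then the algebra `(P, ⋆)` with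
`a ⋆ b = a*b + ⁅a,b⁆` is conservative with associated multiplication `F(a,b) = a ⋆ b`. -/
theorem poisson_star_isConservative
    (K : Type*) [Field K] [CharZero K]
    (P : Type*) [CommRing P] [Algebra K P]
    (br : P →ₗ[K] P →ₗ[K] P)
    (hanti : ∀ a b : P, br a b = - br b a)
    (hjac : ∀ a b c : P, br a (br b c) + br b (br c a) + br c (br a b) = 0)
    (hleib : ∀ a b c : P, br (a * b) c = a * br b c + br a c * b)
    (m F : P → P → P)
    (hm : ∀ a b : P, m a b = a * b + br a b)
    (hF : ∀ a b : P, F a b = m a b) :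
    ∀ a b x y : P,
      m b (m a (m x y) - m (m a x) y - m x (m a y))
        - m a (m (m b x) y) + m (m a (m b x)) y + m (m b x) (m a y)
        - m a (m x (m b y)) + m (m a x) (m b y) + m x (m a (m b y))
      = - m (F a b) (m x y) + m (m (F a b) x) y + m x (m (F a b) y) :=
  poisson_star_isConservative_general K P br hanti hjac hleib m F hm hF
end

section
/- In every conservative left-commutative algebra, the identity (a(bx))y = (F(a,b)x)y holds for all elements a,b,x,y, where F is the associated multiplication. -/
/-!
Write `D_a(x, y) = a(xy) - (ax)y - x(ay)` for the failure of left multiplication by `a` to be a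
derivation. The conservative identity reads `b D_a(x, y) - D_a(bx, y) - D_a(x, by) = -D_{F(a,b)}(x, y)`,
and left commutativity gives `a(xy) = x(ay)`, hence `D_a(x, y) = -(ax)y`. Substituting, the right
side becomes `(F(a,b)x)y` and the left side `-b((ax)y) + (a(bx))y + (ax)(by) = (a(bx))y`.
-/

section LeftCommutative

variable {R A : Type*} [CommRing R] [AddCommGroup A] [Module R A]

def derivationDefect (m : A →ₗ[R] A →ₗ[R] A) (a x y : A) : A :=
  m a (m x y) - m (m a x) y - m x (m a y)

variable {m : A →ₗ[R] A →ₗ[R] A}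

lemma derivationDefect_eq_of_leftComm (hlc : ∀ a b x : A, m a (m b x) = m b (m a x))
    (a x y : A) : derivationDefect m a x y = -m (m a x) y := by
  rw [derivationDefect, hlc a x y]
  abel

lemma mul_derivationDefect_sub_derivationDefect_mul_of_leftComm
    (hlc : ∀ a b x : A, m a (m b x) = m b (m a x)) (a b x y : A) :
    m b (derivationDefect m a x y) - derivationDefect m a (m b x) y
      - derivationDefect m a x (m b y) = m (m a (m b x)) y := by
  simp only [derivationDefect_eq_of_leftComm hlc, map_neg, hlc b (m a x) y]
  abel

end LeftCommutative

theorem conservative_leftCommutative_identity_general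
    (K : Type*) [Field K]
    (A : Type*) [AddCommGroup A] [Module K A]
    (m F : A →ₗ[K] A →ₗ[K] A)
    (hlc : ∀ a b x : A, m a (m b x) = m b (m a x))
    (hcons : ∀ a b x y : A,
      m b (m a (m x y) - m (m a x) y - m x (m a y))
        - m a (m (m b x) y) + m (m a (m b x)) y + m (m b x) (m a y)
        - m a (m x (m b y)) + m (m a x) (m b y) + m x (m a (m b y))
      = - m (F a b) (m x y) + m (m (F a b) x) y + m x (m (F a b) y)) :
    ∀ a b x y : A, m (m a (m b x)) y = m (m (F a b) x) y := by
  intro a b x y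
  have hdefect : m b (derivationDefect m a x y) - derivationDefect m a (m b x) y
      - derivationDefect m a x (m b y) = -derivationDefect m (F a b) x y := by
    convert hcons a b x y using 1 <;> simp only [derivationDefect] <;> abel
  rwa [mul_derivationDefect_sub_derivationDefect_mul_of_leftComm hlc,
    derivationDefect_eq_of_leftComm hlc, neg_neg] at hdefect

/-- In every conservative left-commutative algebra, `(a(bx))y = (F(a,b)x)y`. -/
theorem conservative_leftCommutative_identity
    (K : Type*) [Field K] [CharZero K]
    (A : Type*) [AddCommGroup A] [Module K A]
    (m F : A →ₗ[K] A →ₗ[K] A)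
    (hlc : ∀ a b x : A, m a (m b x) = m b (m a x))
    (hcons : ∀ a b x y : A,
      m b (m a (m x y) - m (m a x) y - m x (m a y))
        - m a (m (m b x) y) + m (m a (m b x)) y + m (m b x) (m a y)
        - m a (m x (m b y)) + m (m a x) (m b y) + m x (m a (m b y))
      = - m (F a b) (m x y) + m (m (F a b) x) y + m x (m (F a b) y)) :
    ∀ a b x y : A, m (m a (m b x)) y = m (m (F a b) x) y :=
  conservative_leftCommutative_identity_general K A m F hlc hcons
end

section
/- The simple left-commutative algebra A with basis {e_1,…,e_n} (n ≥ 2) and multiplication e_i·e_j = j·e_j is not conservative: there is no bilinear multiplication F on A satisfying the conservativity identity. In particular, the required relations e_1(e_1e_1) = F(e_1,e_1)e_1 and e_1(e_1e_2) = F(e_1,e_1)e_2 force the sum of coefficients of F(e_1,e_1) to be simultaneously 1 and 2. -/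
/-!
Left-commutativity cancels all terms of the conservativity identity except
`(a(bx))y = (F(a,b)x)y`. In the algebra at hand `uv = (∑ uᵢ) • (j+1)vⱼ`, so summing
coordinates turns this into `(∑ aᵢ)(∑ bᵢ) ∑ (j+1)² xⱼ = c ∑ (j+1) xⱼ` with `c = ∑ F(a,b)ᵢ`.
For `a = b = e₁`, `x = e₁` gives `c = 1` and `x = e₂` gives `4 = 2c`.
-/

section Conservative

variable {R A : Type*} [CommSemiring R] [AddCommGroup A] [Module R A]

def IsConservative (m : A →ₗ[R] A →ₗ[R] A) (F : A → A → A) : Prop :=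
  ∀ a b x y : A,
    m b (m a (m x y) - m (m a x) y - m x (m a y))
      - m a (m (m b x) y) + m (m a (m b x)) y + m (m b x) (m a y)
      - m a (m x (m b y)) + m (m a x) (m b y) + m x (m a (m b y))
    = - m (F a b) (m x y) + m (m (F a b) x) y + m x (m (F a b) y)

theorem IsConservative.mul_mul_mul_eq_of_leftComm
    {m : A →ₗ[R] A →ₗ[R] A} {F : A → A → A}
    (hF : IsConservative m F) (hcomm : ∀ a b x : A, m a (m b x) = m b (m a x)) (a b x y : A) :
    m (m a (m b x)) y = m (m (F a b) x) y := by
  have h := hF a b x y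
  rw [hcomm a x y, hcomm (m b x) a y, hcomm (m a x) b y, hcomm x a (m b y),
    hcomm x (F a b) y] at h
  simp only [map_sub] at h
  linear_combination (norm := module) h

end Conservative

section WeightedMul

variable (K : Type*) [CommRing K] (n : ℕ)

/-- The algebra `e_i e_j = j e_j` in coordinates, `j : Fin n` standing for `e_{j+1}`. -/
def weightedMul : (Fin n → K) →ₗ[K] (Fin n → K) →ₗ[K] (Fin n → K) :=
  LinearMap.mk₂ K (fun u v j => (∑ i, u i) * (((j : ℕ) + 1 : K) * v j))
    (fun u u' v => by ext j; simp only [Pi.add_apply, Finset.sum_add_distrib]; ring)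
    (fun c u v => by ext j; simp only [Pi.smul_apply, smul_eq_mul, ← Finset.mul_sum]; ring)
    (fun u v v' => by ext j; simp only [Pi.add_apply]; ring)
    (fun c u v => by ext j; simp only [Pi.smul_apply, smul_eq_mul]; ring)

variable {K n}

@[simp]
theorem weightedMul_apply (u v : Fin n → K) (j : Fin n) :
    weightedMul K n u v j = (∑ i, u i) * (((j : ℕ) + 1 : K) * v j) :=
  rfl

theorem weightedMul_leftComm (a b x : Fin n → K) :
    weightedMul K n a (weightedMul K n b x) = weightedMul K n b (weightedMul K n a x) := by
  ext j; simp only [weightedMul_apply]; ring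

theorem IsConservative.weightedMul_sum_eq [NeZero n]
    {F : (Fin n → K) → (Fin n → K) → (Fin n → K)}
    (hF : IsConservative (weightedMul K n) F) (a b x : Fin n → K) :
    (∑ i, a i) * (∑ i, b i) * ∑ j : Fin n, ((j : ℕ) + 1 : K) ^ 2 * x j
      = (∑ i, F a b i) * ∑ j : Fin n, ((j : ℕ) + 1 : K) * x j := by
  have h :=
    congrFun (hF.mul_mul_mul_eq_of_leftComm weightedMul_leftComm a b x (Pi.single 0 1)) 0
  simp only [weightedMul_apply, Pi.single_eq_same, Fin.val_zero, Nat.cast_zero, zero_add,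
    mul_one] at h
  rw [Finset.mul_sum _ _ ((∑ i, a i) * ∑ i, b i), Finset.mul_sum _ _ (∑ i, F a b i), ← h]
  exact Finset.sum_congr rfl fun j _ => by ring

end WeightedMul

/-- The simple left-commutative algebra with basis `e_1, …, e_n` (`n ≥ 2`) and
multiplication `e_i · e_j = j • e_j` is not conservative: no bilinear `F`
satisfies the conservativity identity.  (Here indices `j : Fin n` correspond to
`j+1 ∈ {1,…,n}`, so `m u v = (∑ i, u i) • (fun j => (j+1) * v j)`.) -/
theorem simple_leftCommutative_not_conservative
    (K : Type*) [Field K] [CharZero K]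
    (n : ℕ) (hn : 2 ≤ n)
    (m : (Fin n → K) → (Fin n → K) → (Fin n → K))
    (hm : ∀ u v : Fin n → K, ∀ j : Fin n,
      m u v j = (∑ i : Fin n, u i) * (((j : ℕ) + 1 : K) * v j)) :
    ¬ ∃ F : (Fin n → K) →ₗ[K] (Fin n → K) →ₗ[K] (Fin n → K),
      ∀ a b x y : Fin n → K,
        m b (m a (m x y) - m (m a x) y - m x (m a y))
          - m a (m (m b x) y) + m (m a (m b x)) y + m (m b x) (m a y)
          - m a (m x (m b y)) + m (m a x) (m b y) + m x (m a (m b y))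
        = - m (F a b) (m x y) + m (m (F a b) x) y + m x (m (F a b) y) := by
  rintro ⟨F, hF⟩
  obtain rfl : m = fun u v => weightedMul K n u v := funext₂ fun u v => funext (hm u v)
  have : NeZero n := ⟨by omega⟩
  have key := IsConservative.weightedMul_sum_eq (F := fun a b => F a b) hF
  have h₁ := key (Pi.single 0 1) (Pi.single 0 1) (Pi.single 0 1)
  have h₂ := key (Pi.single 0 1) (Pi.single 0 1) (Pi.single ⟨1, hn⟩ 1)
  simp only [Pi.single_apply, mul_ite, mul_one, mul_zero, Finset.sum_ite_eq', Finset.mem_univ,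
    if_true, Fin.val_zero, Nat.cast_zero, zero_add, one_pow] at h₁ h₂
  rw [← h₁] at h₂
  norm_num at h₂
end

section
/- The space of Jacobi elements of the algebra W(2) (i.e., elements a such that L_a is a derivation of W(2)) is the 6-dimensional subspace spanned by α_{12}^1, α_{21}^1, α_{22}^1, α_{12}^2, α_{21}^2, α_{22}^2; equivalently it is spanned by all α_{ij}^k with i + j > 2. -/
/-! Left multiplication by `a` in `W(2)` is the natural action `B ↦ D ∘ B − B ∘ (D × 1) − B ∘ (1 × D)`
of the endomorphism `D = a(e₁, ·)` on bilinear maps. As this is a Lie algebra action of `gl(E₂)`,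
the defect `a·(A·B) − (a·A)·B − A·(a·B)` collapses to the action of `A(a(e₁, e₁), ·)` on `B`.
It vanishes for all `A, B` iff `a(e₁, e₁) = 0`: otherwise pick `A` with `A(a(e₁, e₁), ·) = id`,
which acts as `−1`. The bilinear maps vanishing at `(e₁, e₁)` are exactly the span of the
`α_{ij}^k` with `(i, j) ≠ (1, 1)`. -/


section

variable (K : Type*) [Field K] [CharZero K]

/-- The 2-dimensional space `E₂`. -/
abbrev V2 := Fin 2 → K

/-- The basis `e 0, e 1` of `E₂`. -/
noncomputable def e (i : Fin 2) : V2 K := Pi.single i 1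

/-- `W(2)`: the space of all bilinear maps on `E₂`. -/
abbrev W := V2 K →ₗ[K] V2 K →ₗ[K] V2 K

/-- The basis elements `α_{ij}^k` of `W(2)`, `alpha i j k (e t) (e l) = δ_{it} δ_{jl} • e k`
(indices shifted to `0,1`). -/
noncomputable def alpha (i j k : Fin 2) : W K :=
  LinearMap.mk₂ K (fun x y => (x i * y j) • e K k)
    (fun x x' y => by simp [add_mul, add_smul])
    (fun c x y => by simp [smul_smul, mul_assoc])
    (fun x y y' => by simp [mul_add, add_smul])
    (fun c x y => by simp [smul_smul]; ring_nf)

/-- The multiplication of the conservative algebra `W(2)`: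
`(A·B)(x,y) = A(e₁, B(x,y)) − B(A(e₁,x), y) − B(x, A(e₁,y))`. -/
noncomputable def mulW (A B : W K) : W K :=
  LinearMap.mk₂ K
    (fun x y => A (e K 0) (B x y) - B (A (e K 0) x) y - B x (A (e K 0) y))
    (fun x x' y => by simp only [map_add, LinearMap.add_apply]; abel)
    (fun c x y => by simp only [map_smul, LinearMap.smul_apply, smul_sub])
    (fun x y y' => by simp only [map_add, LinearMap.add_apply]; abel)
    (fun c x y => by simp only [map_smul, LinearMap.smul_apply, smul_sub])

end

section GlAction

variable {R M : Type*} [CommRing R] [AddCommGroup M] [Module R M]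

noncomputable def glAct (D : Module.End R M) (B : M →ₗ[R] M →ₗ[R] M) : M →ₗ[R] M →ₗ[R] M :=
  LinearMap.mk₂ R (fun x y => D (B x y) - B (D x) y - B x (D y))
    (fun x x' y => by simp only [map_add, LinearMap.add_apply]; abel)
    (fun c x y => by simp only [map_smul, LinearMap.smul_apply, smul_sub])
    (fun x y y' => by simp only [map_add]; abel)
    (fun c x y => by simp only [map_smul, smul_sub])

@[simp]
lemma glAct_apply (D : Module.End R M) (B : M →ₗ[R] M →ₗ[R] M) (x y : M) :
    glAct D B x y = D (B x y) - B (D x) y - B x (D y) := rfl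

@[simp]
lemma glAct_zero (B : M →ₗ[R] M →ₗ[R] M) : glAct 0 B = 0 := by
  ext; simp

@[simp]
lemma glAct_one (B : M →ₗ[R] M →ₗ[R] M) : glAct 1 B = -B := by
  ext; simp

noncomputable def conservativeMul (u : M) (A B : M →ₗ[R] M →ₗ[R] M) : M →ₗ[R] M →ₗ[R] M :=
  glAct (A u) B

lemma conservativeMul_jacobi (u : M) (a A B : M →ₗ[R] M →ₗ[R] M) :
    conservativeMul u a (conservativeMul u A B) =
      conservativeMul u (conservativeMul u a A) B + conservativeMul u A (conservativeMul u a B)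
        + glAct (A (a u u)) B := by
  ext x y
  simp only [conservativeMul, glAct_apply, map_sub, LinearMap.add_apply, LinearMap.sub_apply]
  abel

end GlAction

lemma conservativeMul_isDerivation_iff {K V : Type*} [Field K] [AddCommGroup V] [Module K V]
    (u : V) (a : V →ₗ[K] V →ₗ[K] V) :
    (∀ A B, conservativeMul u a (conservativeMul u A B) =
      conservativeMul u (conservativeMul u a A) B + conservativeMul u A (conservativeMul u a B))
      ↔ a u u = 0 := by
  have key : ∀ A B, conservativeMul u a (conservativeMul u A B) =
      conservativeMul u (conservativeMul u a A) B + conservativeMul u A (conservativeMul u a B)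
      ↔ glAct (A (a u u)) B = 0 := fun A B => by rw [conservativeMul_jacobi, add_eq_left]
  simp only [key]
  refine ⟨fun h => ?_, fun h A B => by simp [h]⟩
  by_contra hv
  obtain ⟨f, hf⟩ := Module.Projective.exists_dual_eq_one K hv
  set A : V →ₗ[K] V →ₗ[K] V := f.smulRight 1
  have hA : A (a u u) = 1 := by simp [A, hf]
  have hA_zero : A = 0 := by simpa [hA] using h A A
  exact hv (by simpa [hA] using congr($hA_zero (a u u) (a u u)))

section W2

variable (K : Type*) [Field K]

lemma mulW_eq_conservativeMul : mulW K = conservativeMul (e K 0) := rfl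

lemma alpha_apply_e_e (i j k t l : Fin 2) :
    alpha K i j k (e K t) (e K l) = if i = t ∧ j = l then e K k else 0 := by
  by_cases hit : i = t <;> by_cases hjl : j = l <;> simp [alpha, e, hit, hjl]

variable {K} in
lemma W_ext {A B : W K} (h : ∀ i j, A (e K i) (e K j) = B (e K i) (e K j)) : A = B :=
  (Pi.basisFun K (Fin 2)).ext fun i => (Pi.basisFun K (Fin 2)).ext fun j => by
    simpa [e] using h i j

lemma eq_sum_alpha (a : W K) : a = ∑ i, ∑ j, ∑ k, a (e K i) (e K j) k • alpha K i j k := by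
  refine W_ext fun t l => ?_
  simp only [LinearMap.coe_sum, Finset.sum_apply, LinearMap.smul_apply, alpha_apply_e_e,
    smul_ite, smul_zero, ite_and, Finset.sum_ite_irrel, Finset.sum_const_zero, Fintype.sum_ite_eq']
  exact pi_eq_sum_univ' _

lemma mem_span_alpha_iff {a : W K} :
    a ∈ Submodule.span K {alpha K 0 1 0, alpha K 1 0 0, alpha K 1 1 0,
      alpha K 0 1 1, alpha K 1 0 1, alpha K 1 1 1} ↔ a (e K 0) (e K 0) = 0 := by
  constructor
  · intro ha
    induction ha using Submodule.span_induction with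
    | mem x hx =>
      rcases hx with rfl | rfl | rfl | rfl | rfl | rfl <;> simp [alpha_apply_e_e]
    | zero => rfl
    | add x y _ _ hx hy => simp [hx, hy]
    | smul c x _ hx => simp [hx]
  · intro h0
    rw [eq_sum_alpha K a]
    refine Submodule.sum_mem _ fun i _ => Submodule.sum_mem _ fun j _ =>
      Submodule.sum_mem _ fun k _ => ?_
    by_cases hij : i = 0 ∧ j = 0
    · simp [hij.1, hij.2, h0]
    · refine Submodule.smul_mem _ _ (Submodule.subset_span ?_)
      fin_cases i <;> fin_cases j <;> fin_cases k <;> simp_all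

end W2

section

variable (K : Type*) [Field K] [CharZero K]

/-- The space of Jacobi elements of `W(2)` (elements `a` such that left
multiplication by `a` is a derivation) is the span of
`α₁₂¹, α₂₁¹, α₂₂¹, α₁₂², α₂₁², α₂₂²` (all `α_{ij}^k` with `i+j>2`). -/
theorem jacobiElements_W2 :
    {a : W K | ∀ A B : W K, mulW K a (mulW K A B)
        = mulW K (mulW K a A) B + mulW K A (mulW K a B)}
      = ↑(Submodule.span K {alpha K 0 1 0, alpha K 1 0 0, alpha K 1 1 0,
          alpha K 0 1 1, alpha K 1 0 1, alpha K 1 1 1}) := by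
  ext a
  rw [Set.mem_ofPred_eq, SetLike.mem_coe, mem_span_alpha_iff, mulW_eq_conservativeMul,
    conservativeMul_isDerivation_iff]

end
end

section
/- The element −α_{11}^1 is a left quasiunit of the algebra W(2): (−α_{11}^1)(AB) = ((−α_{11}^1)A)B + A((−α_{11}^1)B) − AB for all A,B ∈ W(2). Moreover, −α_{11}^1 is not a left unit of W(2). -/
/-!
Writing `L_A = A(e₁, ·)`, the product is `A·B = ⁅L_A, B⁆`, where `End(E₂)` acts on bilinear
maps by derivations. By the Jacobi identity, `u·(A·B) = ⁅⁅L_u, L_A⁆, B⁆ + A·(u·B)`, so `u` is a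
left quasiunit as soon as `L_{u·A} = ⁅L_u, L_A⁆ + L_A` for all `A`. Since
`L_{u·A} = ⁅L_u, L_A⁆ - A(L_u e₁, ·)`, this holds whenever `u(e₁, e₁) = -e₁`, which is the case
for `u = -α₁₁¹`. On the other hand `-α₁₁¹` annihilates `α₂₁¹`.
-/

section

attribute [local instance] LieRing.ofAssociativeRing

variable {R M : Type*} [CommRing R] [AddCommGroup M] [Module R M]

theorem lie_apply_of_apply_eq_neg {φ : Module.End R M} {x : M} (hφ : φ x = -x)
    (A : M →ₗ[R] M →ₗ[R] M) : ⁅φ, A⁆ x = ⁅φ, A x⁆ + A x := by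
  rw [LieHom.lie_apply, Module.End.lie_apply, hφ, map_neg, sub_neg_eq_add]

theorem lie_lie_eq_of_apply_apply_eq_neg {u : M →ₗ[R] M →ₗ[R] M} {x : M} (hu : u x x = -x)
    (A B : M →ₗ[R] M →ₗ[R] M) :
    ⁅u x, ⁅A x, B⁆⁆ = ⁅⁅u x, A⁆ x, B⁆ + ⁅A x, ⁅u x, B⁆⁆ - ⁅A x, B⁆ := by
  rw [leibniz_lie, lie_apply_of_apply_eq_neg hu, add_lie]
  abel

variable (K : Type*) [Field K]

theorem mulW_eq_lie (A B : W K) : mulW K A B = ⁅A (e K 0), B⁆ := by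
  refine LinearMap.ext₂ fun x y => ?_
  simp only [mulW, LinearMap.mk₂_apply, LieHom.lie_apply, LinearMap.sub_apply,
    Module.End.lie_apply]
  abel

end

section

variable (K : Type*) [Field K]

theorem mulW_mulW_of_apply_apply_eq_neg {u : W K} (hu : u (e K 0) (e K 0) = -e K 0)
    (A B : W K) :
    mulW K u (mulW K A B) = mulW K (mulW K u A) B + mulW K A (mulW K u B) - mulW K A B := by
  simp only [mulW_eq_lie]
  exact lie_lie_eq_of_apply_apply_eq_neg hu A B

theorem alpha_apply_apply (i j k : Fin 2) (x y : V2 K) :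
    alpha K i j k x y = (x i * y j) • e K k :=
  LinearMap.mk₂_apply ..

theorem e_apply_self (i : Fin 2) : e K i i = 1 :=
  Pi.single_eq_same i 1

theorem neg_alpha_apply_e_e (i : Fin 2) : (-alpha K i i i) (e K i) (e K i) = -e K i := by
  simp [alpha_apply_apply, e_apply_self]

theorem mulW_neg_alpha000_alpha100 : mulW K (-alpha K 0 0 0) (alpha K 1 0 0) = 0 := by
  refine LinearMap.ext₂ fun x y => ?_
  simp [mulW, alpha_apply_apply, e]

theorem alpha_ne_zero (i j k : Fin 2) : alpha K i j k ≠ 0 := by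
  intro h
  simpa [alpha_apply_apply, e_apply_self] using
    congr_fun (LinearMap.congr_fun₂ h (e K i) (e K j)) k

end

section

variable (K : Type*) [Field K] [CharZero K]

/-- `-α₁₁¹` is a left quasiunit of `W(2)` but not a left unit. -/
theorem negAlpha111_leftQuasiunit :
    (∀ A B : W K, mulW K (-(alpha K 0 0 0)) (mulW K A B)
        = mulW K (mulW K (-(alpha K 0 0 0)) A) B
          + mulW K A (mulW K (-(alpha K 0 0 0)) B) - mulW K A B) ∧
    ¬ (∀ A : W K, mulW K (-(alpha K 0 0 0)) A = A) := by
  refine ⟨mulW_mulW_of_apply_apply_eq_neg K (neg_alpha_apply_e_e K 0), fun h => ?_⟩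
  exact alpha_ne_zero K 1 0 0 ((h _).symm.trans (mulW_neg_alpha000_alpha100 K))

end
end

section
/- The algebra W(2) has exactly one subalgebra of codimension 1, namely the subspace spanned by e_1=α_{11}^1, e_2=α_{12}^1, e_3=α_{21}^1, e_4=α_{22}^1, e_6=α_{12}^2, e_7=α_{21}^2, e_8=α_{22}^2 (i.e., the span of all basis elements except e_5=α_{11}^2). -/
set_option maxSynthPendingDepth 3
set_option synthInstance.maxHeartbeats 1000000
set_option maxHeartbeats 1000000

/-!
Left multiplication by `A` in `W(2)` is the natural action `act D` of `D = A(e₁, ·) ∈ End(E₂)` on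
bilinear maps, and `A ↦ A(e₁, ·)` maps `W(2)` onto `End(E₂)` with kernel `N = {A | A(e₁, ·) = 0}`.
Write a subalgebra of codimension one as `ker f`.

If `N ⊄ ker f`, then `ker f` contains elements with every prescribed `A(e₁, ·)`, so it is invariant
under `act D` for all `D`. Each `f ∘ act D` is then a multiple `λ(D) • f`, so `λ` kills
commutators; but the commutator `diag(1, -1) = [E₁₂, E₂₁]` acts on `α_{ij}^k` by the scalar
`h_k - h_i - h_j` with `h = (1, -1)`, which is odd and hence non-zero, forcing `f = 0`. Hence `N ⊆ ker f`. Modulo `N` we have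
`act D α_{2j}^k ≡ -D(e₁)₂ • α_{1j}^k`, so an element of `ker f` with non-zero `α_{11}^2`-coordinate
`A(e₁, e₁)₂` would again force `f = 0`. So `ker f` is the kernel of that coordinate.
-/

open LinearMap

theorem LinearMap.exists_eq_smul_of_ker_le {K V : Type*} [Field K] [AddCommGroup V] [Module K V]
    {f g : V →ₗ[K] K} (h : ker f ≤ ker g) : ∃ c : K, g = c • f := by
  have : g ∈ Submodule.span K (Set.range fun _ : Unit => f) :=
    mem_span_of_iInf_ker_le_ker (by simpa using h)
  simpa [Submodule.mem_span_singleton, eq_comm] using this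

theorem Submodule.exists_ker_eq_of_finrank_add_one {K V : Type*} [Field K] [AddCommGroup V]
    [Module K V] [FiniteDimensional K V] (B : Submodule K V)
    (h : Module.finrank K B + 1 = Module.finrank K V) : ∃ f : V →ₗ[K] K, f ≠ 0 ∧ ker f = B := by
  have hB : B < ⊤ := lt_top_iff_ne_top.2 fun hB => by rw [hB, finrank_top] at h; omega
  obtain ⟨f, hf, hle⟩ := B.exists_le_ker_of_lt_top hB
  have hker : ker f ≠ ⊤ := fun h => hf (ker_eq_top.1 h)
  refine ⟨f, hf, (Submodule.eq_of_le_of_finrank_le hle ?_).symm⟩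
  have := Submodule.finrank_lt hker
  omega

namespace W2

variable (K : Type*) [Field K]

def act (D : Module.End K (V2 K)) : W K →ₗ[K] W K where
  toFun y := y.compr₂ D - y ∘ₗ D - y.compl₂ D
  map_add' y y' := LinearMap.ext₂ fun x z => by
    simp only [LinearMap.add_apply, LinearMap.sub_apply, compr₂_apply, coe_comp,
      Function.comp_apply, compl₂_apply, map_add]
    abel
  map_smul' c y := LinearMap.ext₂ fun x z => by simp [smul_sub]

lemma act_apply (D : Module.End K (V2 K)) (y : W K) (x z : V2 K) :
    act K D y x z = D (y x z) - y (D x) z - y x (D z) := rfl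

lemma mulW_eq_act (x y : W K) : mulW K x y = act K (x (e K 0)) y := rfl

lemma exists_apply_e0_eq (D : Module.End K (V2 K)) : ∃ x : W K, x (e K 0) = D :=
  ⟨(LinearMap.proj 0).smulRight D, by simp [e]⟩

lemma act_mul_sub_mul (D D' : Module.End K (V2 K)) (y : W K) :
    act K (D * D' - D' * D) y = act K D (act K D' y) - act K D' (act K D y) :=
  LinearMap.ext₂ fun x z => by
    simp only [act_apply, LinearMap.sub_apply, Module.End.mul_apply, map_sub]
    abel

lemma act_diagonal_alpha (h : Fin 2 → K) (i j k : Fin 2) :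
    act K (Matrix.toLin' (Matrix.diagonal h)) (alpha K i j k)
      = (h k - h i - h j) • alpha K i j k := by
  refine LinearMap.ext₂ fun x z => funext fun t => ?_
  simp only [act_apply, alpha, e, LinearMap.mk₂_apply, Matrix.toLin'_apply,
    Matrix.mulVec_diagonal, Pi.sub_apply, Pi.smul_apply, Pi.single_apply, smul_eq_mul,
    LinearMap.smul_apply]
  split_ifs with htk
  · subst htk; ring
  · ring

lemma single_mul_single_sub_single_mul_single :
    (Matrix.single 0 1 1 * Matrix.single 1 0 1 - Matrix.single 1 0 1 * Matrix.single 0 1 1 :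
      Matrix (Fin 2) (Fin 2) K) = Matrix.diagonal ![1, -1] := by
  ext i j
  fin_cases i <;> fin_cases j <;> simp [Matrix.single, Matrix.mul_apply]

lemma weight_ne_zero [CharZero K] (i j k : Fin 2) :
    (![1, -1] k - ![1, -1] i - ![1, -1] j : K) ≠ 0 := by
  fin_cases i <;> fin_cases j <;> fin_cases k <;> norm_num

lemma alpha_one_apply_e0 (j k : Fin 2) : alpha K 1 j k (e K 0) = 0 := by
  ext; simp [alpha, e]

lemma act_alpha_one_add_apply_e0 (D : Module.End K (V2 K)) (q r : Fin 2) :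
    (act K D (alpha K 1 q r) + D (e K 0) 1 • alpha K 0 q r) (e K 0) = 0 := by
  refine LinearMap.ext fun z => funext fun t => ?_
  simp [act_apply, alpha, e, mul_assoc]

noncomputable def coord (i j k : Fin 2) : W K →ₗ[K] K :=
  LinearMap.proj k ∘ₗ LinearMap.applyₗ (e K j) ∘ₗ LinearMap.applyₗ (e K i)

lemma coord_apply (i j k : Fin 2) (x : W K) : coord K i j k x = x (e K i) (e K j) k := rfl

lemma sum_coord_smul_alpha (x : W K) :
    ∑ i, ∑ j, ∑ k, coord K i j k x • alpha K i j k = x := by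
  refine (Pi.basisFun K (Fin 2)).ext fun i => (Pi.basisFun K (Fin 2)).ext fun j => ?_
  funext k
  fin_cases i <;> fin_cases j <;> fin_cases k <;>
    simp [coord_apply, alpha, e, Fin.sum_univ_two]

lemma eq_zero_of_forall_alpha {f : W K →ₗ[K] K} (hf : ∀ i j k, f (alpha K i j k) = 0) :
    f = 0 := by
  ext x
  rw [← sum_coord_smul_alpha K x]
  simp [hf]

lemma finrank_W : Module.finrank K (W K) = 8 := by
  simp [Module.finrank_linearMap]

lemma finrank_ker_coord (i j k : Fin 2) : Module.finrank K (ker (coord K i j k)) = 7 := by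
  have hsurj : range (coord K i j k) = ⊤ :=
    range_eq_top.2 fun c => ⟨c • alpha K i j k, by simp [coord_apply, alpha, e]⟩
  have := finrank_range_add_finrank_ker (coord K i j k)
  rw [hsurj, finrank_top, Module.finrank_self, finrank_W] at this
  omega

lemma span_eq_ker_coord :
    Submodule.span K {alpha K 0 0 0, alpha K 0 1 0, alpha K 1 0 0, alpha K 1 1 0,
      alpha K 0 1 1, alpha K 1 0 1, alpha K 1 1 1} = ker (coord K 0 0 1) := by
  refine le_antisymm ?_ fun x hx => ?_
  · simp [Submodule.span_le, Set.insert_subset_iff, coord_apply, alpha, e]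
  · rw [mem_ker] at hx
    rw [← sum_coord_smul_alpha K x]
    simp only [Fin.sum_univ_two, Fin.isValue, hx, zero_smul, add_zero]
    apply_rules [Submodule.add_mem, Submodule.smul_mem]
    all_goals exact Submodule.subset_span (by simp)

lemma apply_e0_e0_eq_smul_of_coord_eq_zero {x : W K} (hx : coord K 0 0 1 x = 0) :
    x (e K 0) (e K 0) = coord K 0 0 0 x • e K 0 := by
  funext t
  fin_cases t
  · simp [coord_apply, e]
  · simpa [coord_apply, e] using hx

lemma mulW_mem_ker_coord {x y : W K} (hx : x ∈ ker (coord K 0 0 1))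
    (hy : y ∈ ker (coord K 0 0 1)) : mulW K x y ∈ ker (coord K 0 0 1) := by
  rw [mem_ker] at *
  rw [coord_apply, mulW_eq_act, act_apply, apply_e0_e0_eq_smul_of_coord_eq_zero K hx,
    apply_e0_e0_eq_smul_of_coord_eq_zero K hy]
  rw [coord_apply] at hx hy
  simp [hx, hy]

theorem eq_zero_of_forall_act_mem_ker [CharZero K] {f : W K →ₗ[K] K}
    (hf : ∀ D y, f y = 0 → f (act K D y) = 0) : f = 0 := by
  have hscalar (D : Module.End K (V2 K)) : ∃ c : K, ∀ y, f (act K D y) = c * f y := by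
    obtain ⟨c, hc⟩ := exists_eq_smul_of_ker_le (g := f ∘ₗ act K D) fun y hy => hf D y hy
    exact ⟨c, fun y => by simpa using LinearMap.congr_fun hc y⟩
  obtain ⟨c, hc⟩ := hscalar (Matrix.toLin' (Matrix.single 0 1 1))
  obtain ⟨c', hc'⟩ := hscalar (Matrix.toLin' (Matrix.single 1 0 1))
  refine eq_zero_of_forall_alpha K fun i j k => ?_
  have key := congrArg f (act_diagonal_alpha K ![1, -1] i j k)
  rw [← single_mul_single_sub_single_mul_single, map_sub, Matrix.toLin'_mul,
    Matrix.toLin'_mul, ← Module.End.mul_eq_comp, ← Module.End.mul_eq_comp] at key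
  simp only [act_mul_sub_mul, map_sub, hc, hc', map_smul, smul_eq_mul] at key
  have hweight : (![1, -1] k - ![1, -1] i - ![1, -1] j : K) * f (alpha K i j k) = 0 := by
    rw [← key]; ring
  exact (mul_eq_zero.1 hweight).resolve_left (weight_ne_zero K i j k)

theorem apply_eq_zero_of_apply_e0_eq_zero [CharZero K] {f : W K →ₗ[K] K} (hf : f ≠ 0)
    (hB : ∀ x ∈ ker f, ∀ y ∈ ker f, mulW K x y ∈ ker f) {n : W K} (hn : n (e K 0) = 0) :
    f n = 0 := by
  by_contra hfn
  refine hf (eq_zero_of_forall_act_mem_ker K fun D y hy => ?_)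
  obtain ⟨x, hx⟩ := exists_apply_e0_eq K D
  have hb : (x - (f x / f n) • n) (e K 0) = D := by simp [hx, hn]
  rw [← hb, ← mulW_eq_act]
  exact hB _ (by simp [hfn]) y hy

theorem ker_le_ker_coord [CharZero K] {f : W K →ₗ[K] K} (hf : f ≠ 0)
    (hB : ∀ x ∈ ker f, ∀ y ∈ ker f, mulW K x y ∈ ker f) : ker f ≤ ker (coord K 0 0 1) := by
  intro x hx
  by_contra hx1
  have hN (n : W K) (hn : n (e K 0) = 0) : f n = 0 := apply_eq_zero_of_apply_e0_eq_zero K hf hB hn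
  refine hf (eq_zero_of_forall_alpha K fun i q r => ?_)
  fin_cases i
  · have hprod : f (mulW K x (alpha K 1 q r)) = 0 := hB x hx _ (hN _ (alpha_one_apply_e0 K q r))
    have h := hN _ (act_alpha_one_add_apply_e0 K (x (e K 0)) q r)
    rw [map_add, ← mulW_eq_act, hprod, map_smul, zero_add, smul_eq_mul] at h
    exact (mul_eq_zero.1 h).resolve_left hx1
  · exact hN _ (alpha_one_apply_e0 K q r)

end W2

open W2

section

variable (K : Type*) [Field K] [CharZero K]

/-- `W(2)` has exactly one subalgebra of codimension 1, namely the span of all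
basis elements `α_{ij}^k` except `e₅ = α₁₁²`. -/
theorem subalgebras_codim_one_W2 :
    {B : Submodule K (W K) |
        (∀ x ∈ B, ∀ y ∈ B, mulW K x y ∈ B) ∧ Module.finrank K B = 7}
      = {Submodule.span K {alpha K 0 0 0, alpha K 0 1 0, alpha K 1 0 0,
          alpha K 1 1 0, alpha K 0 1 1, alpha K 1 0 1, alpha K 1 1 1}} := by
  rw [span_eq_ker_coord]
  ext B
  simp only [Set.mem_ofPred_eq, Set.mem_singleton_iff]
  constructor
  · rintro ⟨hB, hrank⟩
    obtain ⟨f, hf, rfl⟩ := B.exists_ker_eq_of_finrank_add_one (by rw [hrank, finrank_W])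
    exact Submodule.eq_of_le_of_finrank_eq (ker_le_ker_coord K hf hB)
      (by rw [hrank, finrank_ker_coord])
  · rintro rfl
    exact ⟨fun x hx y hy => mulW_mem_ker_coord K hx hy, finrank_ker_coord K 0 0 1⟩

end
end

section
/- The algebra W_2 has exactly one subalgebra of codimension 1, namely the span of ξ_1, ξ_2, ξ_3, ξ_5, ξ_6 (i.e., the span of all basis elements except ξ_4). -/
section

variable (K : Type*) [Field K] [CharZero K]

/-- The underlying space of the 6-dimensional algebra `W₂` of commutative bilinear
operations on a 2-dimensional space, with basis `ξ₁, …, ξ₆` (indexed `0,…,5`). -/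
abbrev W2c := Fin 6 → K

/-- The basis vectors `ξ₁, …, ξ₆`. -/
noncomputable def xi (i : Fin 6) : W2c K := Pi.single i 1

/-- The multiplication table of `W₂`: row `i`, column `j` is `ξ_{i+1} ξ_{j+1}`. -/
noncomputable def Tw : Fin 6 → Fin 6 → W2c K :=
  ![![-xi K 0, 0, xi K 2, (-2:K) • xi K 3, -xi K 4, 0],
    ![-xi K 1, (-2:K) • xi K 2, 0, xi K 0 - xi K 4, xi K 1 - (2:K) • xi K 5, xi K 2],
    ![0, 0, 0, 0, 0, 0],
    ![xi K 3, xi K 4 - (2:K) • xi K 0, -xi K 1 + xi K 5, 0, (-2:K) • xi K 3, -xi K 4],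
    ![0, -xi K 1, (-2:K) • xi K 2, xi K 3, 0, -xi K 5],
    ![0, 0, 0, 0, 0, 0]]

/-- The multiplication of `W₂`, extended bilinearly from the table. -/
noncomputable def mulT (u v : W2c K) : W2c K :=
  ∑ i : Fin 6, ∑ j : Fin 6, (u i * v j) • Tw K i j

end

/-! A codimension-one subspace is the kernel of a nonzero functional `f`; write `aᵢ = f ξᵢ`.
Since every `aⱼ ξᵢ - aᵢ ξⱼ` lies in `ker f`, closure under the product yields, through the
multiplication table, cubic relations among the `aᵢ`. Suitable instances, and sums of two of
them, reduce one after the other to nonzero multiples of `a₃³, a₆³, a₁³, a₂³, a₅³` (the first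
needs `2 ≠ 0`), so `f` is a multiple of the `ξ₄`-coordinate. Conversely, the `ξ₄`-coordinate
of `uv` is `u₄ (v₁ - 2 v₅) + (u₅ - 2 u₁) v₄`, so the hyperplane `u₄ = 0` is closed under the
product. -/

open Module

theorem Submodule.exists_dual_eq_ker_of_finrank_add_one {K V : Type*} [Field K]
    [AddCommGroup V] [Module K V] [FiniteDimensional K V] {B : Submodule K V}
    (hB : finrank K B + 1 = finrank K V) : ∃ f : Dual K V, f ≠ 0 ∧ B = LinearMap.ker f := by
  have hlt : B < ⊤ := lt_top_iff_ne_top.mpr fun h => by rw [h, finrank_top] at hB; omega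
  obtain ⟨f, hf0, hfB⟩ := B.exists_dual_map_eq_bot_of_lt_top hlt inferInstance
  refine ⟨f, hf0, Submodule.eq_of_le_of_finrank_le (LinearMap.le_ker_iff_map.mpr hfB) ?_⟩
  have := f.finrank_ker_add_one_of_ne_zero hf0
  omega

theorem Module.Dual.smul_sub_smul_mem_ker {R M : Type*} [CommRing R] [AddCommGroup M]
    [Module R M] (f : Dual R M) (x y : M) : f y • x - f x • y ∈ LinearMap.ker f := by
  simp [mul_comm]

theorem Module.Dual.eq_smul_proj_of_apply_single_eq_zero {R ι : Type*} [CommSemiring R]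
    [Finite ι] [DecidableEq ι] (f : Dual R (ι → R)) (i₀ : ι) (h : ∀ i ≠ i₀, f (Pi.single i 1) = 0) :
    f = f (Pi.single i₀ 1) • LinearMap.proj i₀ := by
  refine LinearMap.pi_ext fun i x => ?_
  rw [← mul_one x, ← smul_eq_mul, Pi.single_smul', map_smul, map_smul]
  by_cases hi : i = i₀
  · subst hi; simp [mul_comm]
  · simp [h i hi, Ne.symm hi]

theorem LinearMap.finrank_ker_proj_add_one {K ι : Type*} [Field K] [Fintype ι] [DecidableEq ι]
    (i : ι) :
    finrank K (LinearMap.ker (LinearMap.proj i : (ι → K) →ₗ[K] K)) + 1 = Fintype.card ι := by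
  have hi : (LinearMap.proj i : Dual K (ι → K)) ≠ 0 := fun h => by
    simpa using LinearMap.congr_fun h (Pi.single i 1)
  rw [Module.Dual.finrank_ker_add_one_of_ne_zero hi, Module.finrank_fintype_fun_eq_card]

section

variable {K : Type*} [Field K]

theorem xi_apply (i j : Fin 6) : xi K i j = if j = i then 1 else 0 :=
  Pi.single_apply i 1 j

theorem mulT_xi_xi (i k : Fin 6) : mulT K (xi K i) (xi K k) = Tw K i k := by
  simp [mulT, xi_apply]

theorem mulT_apply_three (u v : W2c K) :
    mulT K u v 3 = u 3 * (v 0 - 2 * v 4) + (u 4 - 2 * u 0) * v 3 := by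
  simp [mulT, Tw, Fin.sum_univ_six, xi_apply]
  ring

theorem mulT_smul_sub_smul (p q r s : K) (x y z w : W2c K) :
    mulT K (p • x - q • y) (r • z - s • w) =
      (p * r) • mulT K x z - (p * s) • mulT K x w - (q * r) • mulT K y z
        + (q * s) • mulT K y w := by
  simp only [mulT, Finset.smul_sum, ← Finset.sum_sub_distrib, ← Finset.sum_add_distrib, smul_smul]
  refine Finset.sum_congr rfl fun i _ => Finset.sum_congr rfl fun j _ => ?_
  simp only [Pi.sub_apply, Pi.smul_apply, smul_eq_mul]
  module

theorem cubic_relation_of_mulT_mem_ker (f : Dual K (W2c K))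
    (hf : ∀ x ∈ LinearMap.ker f, ∀ y ∈ LinearMap.ker f, mulT K x y ∈ LinearMap.ker f)
    (i j k l : Fin 6) :
    f (xi K j) * f (xi K l) * f (Tw K i k) - f (xi K j) * f (xi K k) * f (Tw K i l)
      - f (xi K i) * f (xi K l) * f (Tw K j k) + f (xi K i) * f (xi K k) * f (Tw K j l) = 0 := by
  simpa only [LinearMap.mem_ker, mulT_smul_sub_smul, mulT_xi_xi, map_add, map_sub, map_smul,
    smul_eq_mul] using hf _ (f.smul_sub_smul_mem_ker (xi K i) (xi K j))
      _ (f.smul_sub_smul_mem_ker (xi K k) (xi K l))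

theorem apply_xi_eq_zero_of_mulT_mem_ker [CharZero K] (f : Dual K (W2c K))
    (hf : ∀ x ∈ LinearMap.ker f, ∀ y ∈ LinearMap.ker f, mulT K x y ∈ LinearMap.ker f)
    (i : Fin 6) (hi : i ≠ 3) : f (xi K i) = 0 := by
  have r₁ := cubic_relation_of_mulT_mem_ker f hf 1 2 1 2
  have r₂ := cubic_relation_of_mulT_mem_ker f hf 1 5 4 5
  have r₃ := cubic_relation_of_mulT_mem_ker f hf 3 5 2 5
  have r₄ := cubic_relation_of_mulT_mem_ker f hf 0 1 0 3
  have r₅ := cubic_relation_of_mulT_mem_ker f hf 0 3 0 1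
  have r₆ := cubic_relation_of_mulT_mem_ker f hf 3 1 2 1
  have r₇ := cubic_relation_of_mulT_mem_ker f hf 3 4 5 4
  simp only [Tw, Matrix.cons_val, map_smul, map_neg, map_sub, map_add, map_zero, smul_eq_mul]
    at r₁ r₂ r₃ r₄ r₅ r₆ r₇
  have h2 : f (xi K 2) = 0 := by linear_combination (exp := 3) (-1/2 : K) * r₁
  have h5 : f (xi K 5) = 0 := by linear_combination (exp := 3) -r₂ - r₃
  have h0 : f (xi K 0) = 0 := by linear_combination (exp := 3) -r₄ - r₅
  rw [h2, h5] at r₆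
  rw [h5] at r₇
  have h1 : f (xi K 1) = 0 := by linear_combination (exp := 3) -r₆
  have h4 : f (xi K 4) = 0 := by linear_combination (exp := 3) -r₇
  fin_cases i <;> first | assumption | exact absurd rfl hi

theorem span_xi_ne_three_eq_ker_proj :
    Submodule.span K {xi K 0, xi K 1, xi K 2, xi K 4, xi K 5}
      = LinearMap.ker (LinearMap.proj 3) := by
  refine le_antisymm ?_ fun x hx => ?_
  · simp [Submodule.span_le, Set.insert_subset_iff, xi_apply]
  · have h3 : x 3 = 0 := hx
    have hx' :
        x = x 0 • xi K 0 + x 1 • xi K 1 + x 2 • xi K 2 + x 4 • xi K 4 + x 5 • xi K 5 := by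
      funext j
      fin_cases j <;> simp [xi_apply, h3]
    rw [hx']
    refine add_mem (add_mem (add_mem (add_mem ?_ ?_) ?_) ?_) ?_ <;>
      exact Submodule.smul_mem _ _ (Submodule.subset_span (by simp))

end

section

variable (K : Type*) [Field K] [CharZero K]

/-- `W₂` has exactly one subalgebra of codimension 1, namely the span of
`ξ₁, ξ₂, ξ₃, ξ₅, ξ₆` (all basis elements except `ξ₄`). -/
theorem subalgebras_codim_one_W2c :
    {B : Submodule K (W2c K) |
        (∀ x ∈ B, ∀ y ∈ B, mulT K x y ∈ B) ∧ Module.finrank K B = 5}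
      = {Submodule.span K {xi K 0, xi K 1, xi K 2, xi K 4, xi K 5}} := by
  rw [span_xi_ne_three_eq_ker_proj]
  refine Set.eq_singleton_iff_unique_mem.mpr ⟨⟨fun x hx y hy => ?_, ?_⟩, ?_⟩
  · simp_all [LinearMap.mem_ker, mulT_apply_three]
  · simpa using LinearMap.finrank_ker_proj_add_one (K := K) (3 : Fin 6)
  · rintro B ⟨hmul, hrank⟩
    obtain ⟨f, hf0, rfl⟩ := B.exists_dual_eq_ker_of_finrank_add_one (by simp [hrank])
    have hf := f.eq_smul_proj_of_apply_single_eq_zero 3 (apply_xi_eq_zero_of_mulT_mem_ker f hmul)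
    have h3 : f (Pi.single 3 1) ≠ 0 := fun h => hf0 (by rw [hf, h, zero_smul])
    rw [hf, LinearMap.ker_smul _ _ h3]
end
end
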